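/- For every integer n ≥ 1, with l := x_0^{-2} x_1 x_0^{n+1} x_1^{-n} and r := x_0^2 l in Thompson's group F, the only element of {x_0 r, x_0^{-1} r, x_1 r, x_1^{-1} r} whose word length with respect to {x_0, x_1} is at most 2n + 2 is x_1^{-1} r; that is, x_1^{-1} r is the unique neighbor of r in the Cayley graph of F lying in the ball B_{2n+2}. -/

import Mathlib

/-
`F` acts on `ℚ` by piecewise-linear maps: `x i` fixes `(-∞, i]`, has slope `1/2` on `[i, i + 2]`
and is the translation by `-1` beyond. Measure points by the levels `psi c`, equal to `2 ^ c` for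
`c ≤ 0` and to `c + 1` for `c ≥ 0`. Then `x₀^{±1}` moves `psi c` exactly to `psi (c ∓ 1)`, `x₁`
moves no point up, and `x₁⁻¹` raises a level by at most one. Following the point `2 = psi 1`
along a geodesic word for `g`, and comparing letter counts with the exponent sums of `g`, gives
`act g 2 ≤ psi c` as soon as `ℓ(g) < 2c + expSum g + 2 x0ExpSum g`. Since `act (r n) 2 = 1`, this
rules out `ℓ(g) ≤ 2n + 2` for `g = x₀ r` and `g = x₁ r`. For `x₀⁻¹ r` the bound is attained;
there one uses that a letter `x₀⁻¹` or `x₁` in the word makes it strict, unless the point ends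
below `1`.
-/

namespace ThompsonF

/-- The defining relators of Thompson's group `F`:
for `i < j`, the relator `x_i⁻¹ * x_j * x_i * x_{j+1}⁻¹`. -/
def rels : Set (FreeGroup ℕ) :=
  {r | ∃ i j : ℕ, i < j ∧
    r = (FreeGroup.of i)⁻¹ * FreeGroup.of j * FreeGroup.of i * (FreeGroup.of (j + 1))⁻¹}

/-- Thompson's group `F`, presented by `⟨x₀, x₁, … ∣ x_i⁻¹ x_j x_i = x_{j+1} for i < j⟩`. -/
abbrev F : Type := PresentedGroup rels

/-- The generator `x_i` of Thompson's group `F`. -/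
def x (i : ℕ) : F := PresentedGroup.of i

/-- The symmetrized generating set `{x₀, x₀⁻¹, x₁, x₁⁻¹}`. -/
def gens : Set F := {x 0, (x 0)⁻¹, x 1, (x 1)⁻¹}

/-- The word length `ℓ(g)` with respect to `{x₀, x₁}`: the least `m` such that `g` is a
product of `m` elements of `{x₀, x₀⁻¹, x₁, x₁⁻¹}`. -/
noncomputable def len (g : F) : ℕ :=
  sInf {m | ∃ w : List F, w.length = m ∧ (∀ a ∈ w, a ∈ gens) ∧ w.prod = g}

/-- `IsPathIn n f g m c` means `c 0 = f, c 1, …, c m = g` is a path of length `m`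
from `f` to `g` inside the ball `B_n`: consecutive vertices differ by left
multiplication by a generator, and every vertex has length at most `n`. -/
def IsPathIn (n : ℕ) (f g : F) (m : ℕ) (c : ℕ → F) : Prop :=
  c 0 = f ∧ c m = g ∧ (∀ k < m, c (k + 1) * (c k)⁻¹ ∈ gens) ∧ ∀ k ≤ m, len (c k) ≤ n

/-- The element `l = x₀⁻² x₁ x₀^{n+1} x₁⁻ⁿ`. -/
def l (n : ℕ) : F := x 0 ^ (-2 : ℤ) * x 1 * x 0 ^ ((n : ℤ) + 1) * x 1 ^ (-(n : ℤ))

/-- The element `r = x₀² l`. -/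
def r (n : ℕ) : F := x 0 ^ 2 * l n

def xMap (i t : ℚ) : ℚ := if t ≤ i then t else if t ≤ i + 2 then (t + i) / 2 else t - 1

def xInvMap (i t : ℚ) : ℚ := if t ≤ i then t else if t ≤ i + 1 then 2 * t - i else t + 1

lemma xInvMap_xMap (i t : ℚ) : xInvMap i (xMap i t) = t := by
  unfold xInvMap xMap; split_ifs <;> linarith

lemma xMap_xInvMap (i t : ℚ) : xMap i (xInvMap i t) = t := by
  unfold xInvMap xMap; split_ifs <;> linarith

lemma strictMono_xMap (i : ℚ) : StrictMono (xMap i) := by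
  intro s t hst; unfold xMap; split_ifs <;> linarith

lemma strictMono_xInvMap (i : ℚ) : StrictMono (xInvMap i) := by
  intro s t hst; unfold xInvMap; split_ifs <;> linarith

lemma xInvMap_of_le {i t : ℚ} (ht : t ≤ i) : xInvMap i t = t := if_pos ht

lemma xMap_of_add_two_le {i t : ℚ} (ht : i + 2 ≤ t) : xMap i t = t - 1 := by
  unfold xMap; split_ifs <;> linarith

lemma xInvMap_of_add_one_le {i t : ℚ} (ht : i + 1 ≤ t) : xInvMap i t = t + 1 := by
  unfold xInvMap; split_ifs <;> linarith

lemma xMap_one_le (t : ℚ) : xMap 1 t ≤ t := by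
  unfold xMap; split_ifs <;> linarith

lemma xMap_one_lt {t : ℚ} (ht : 1 < t) : xMap 1 t < t := by
  unfold xMap; split_ifs <;> linarith

lemma xMap_zero_le_one {t : ℚ} (ht : t ≤ 1) : xMap 0 t ≤ 1 := by
  unfold xMap; split_ifs <;> linarith

lemma xInvMap_xMap_xMap {i j : ℚ} (hij : i + 1 ≤ j) (t : ℚ) :
    xInvMap i (xMap j (xMap i t)) = xMap (j + 1) t := by
  unfold xInvMap xMap; split_ifs <;> linarith

def xPerm (i : ℕ) : Equiv.Perm ℚ := ⟨xMap i, xInvMap i, xInvMap_xMap i, xMap_xInvMap i⟩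

lemma xPerm_conj {i j : ℕ} (hij : i < j) :
    (xPerm i)⁻¹ * xPerm j * xPerm i = xPerm (j + 1) := by
  ext t
  change xInvMap i (xMap j (xMap i t)) = xMap ((j + 1 : ℕ) : ℚ) t
  rw [Nat.cast_succ, xInvMap_xMap_xMap (by exact_mod_cast hij)]

lemma lift_xPerm_rels_eq_one : ∀ ρ ∈ rels, FreeGroup.lift xPerm ρ = 1 := by
  rintro ρ ⟨i, j, hij, rfl⟩
  simp only [map_mul, map_inv, FreeGroup.lift_apply_of]
  rw [xPerm_conj hij, mul_inv_cancel]

noncomputable def act : F →* Equiv.Perm ℚ := PresentedGroup.toGroup lift_xPerm_rels_eq_one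

@[simp] lemma act_x_apply (i : ℕ) (t : ℚ) : act (x i) t = xMap i t := by
  simp [act, x, PresentedGroup.toGroup.of, xPerm]

@[simp] lemma act_x_symm_apply (i : ℕ) (t : ℚ) : (act (x i)).symm t = xInvMap i t := by
  simp [act, x, PresentedGroup.toGroup.of, xPerm]

lemma lift_ofAdd_rels_eq_one (f : ℕ → ℤ) (hf : ∀ j, 0 < j → f (j + 1) = f j) :
    ∀ ρ ∈ rels, FreeGroup.lift (fun i => Multiplicative.ofAdd (f i)) ρ = 1 := by
  rintro ρ ⟨i, j, hij, rfl⟩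
  simp only [map_mul, map_inv, FreeGroup.lift_apply_of, hf j (by omega)]
  apply Multiplicative.toAdd.injective
  simp

noncomputable def weightedExpSum (f : ℕ → ℤ) (hf : ∀ j, 0 < j → f (j + 1) = f j) (g : F) : ℤ :=
  (PresentedGroup.toGroup (lift_ofAdd_rels_eq_one f hf) g).toAdd

section weightedExpSum

variable {f : ℕ → ℤ} {hf : ∀ j, 0 < j → f (j + 1) = f j}

lemma weightedExpSum_one : weightedExpSum f hf 1 = 0 := by simp [weightedExpSum]

lemma weightedExpSum_mul (g h : F) :
    weightedExpSum f hf (g * h) = weightedExpSum f hf g + weightedExpSum f hf h := by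
  simp [weightedExpSum]

lemma weightedExpSum_inv (g : F) : weightedExpSum f hf g⁻¹ = -weightedExpSum f hf g := by
  simp [weightedExpSum]

lemma weightedExpSum_pow (g : F) (k : ℕ) :
    weightedExpSum f hf (g ^ k) = k * weightedExpSum f hf g := by
  simp [weightedExpSum]

lemma weightedExpSum_x (i : ℕ) : weightedExpSum f hf (x i) = f i := by
  simp [weightedExpSum, x, PresentedGroup.toGroup.of]

end weightedExpSum

noncomputable def x0ExpSum : F → ℤ :=
  weightedExpSum (fun i => if i = 0 then 1 else 0) fun j hj => by simp [hj.ne']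

noncomputable def expSum : F → ℤ := weightedExpSum (fun _ => 1) fun _ _ => rfl

@[simp] lemma x0ExpSum_one : x0ExpSum 1 = 0 := weightedExpSum_one
@[simp] lemma x0ExpSum_mul (g h : F) : x0ExpSum (g * h) = x0ExpSum g + x0ExpSum h :=
  weightedExpSum_mul g h
@[simp] lemma x0ExpSum_inv (g : F) : x0ExpSum g⁻¹ = -x0ExpSum g := weightedExpSum_inv g
@[simp] lemma x0ExpSum_pow (g : F) (k : ℕ) : x0ExpSum (g ^ k) = k * x0ExpSum g :=
  weightedExpSum_pow g k
@[simp] lemma x0ExpSum_x_zero : x0ExpSum (x 0) = 1 := weightedExpSum_x 0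
@[simp] lemma x0ExpSum_x_one : x0ExpSum (x 1) = 0 := weightedExpSum_x 1

@[simp] lemma expSum_one : expSum 1 = 0 := weightedExpSum_one
@[simp] lemma expSum_mul (g h : F) : expSum (g * h) = expSum g + expSum h :=
  weightedExpSum_mul g h
@[simp] lemma expSum_inv (g : F) : expSum g⁻¹ = -expSum g := weightedExpSum_inv g
@[simp] lemma expSum_pow (g : F) (k : ℕ) : expSum (g ^ k) = k * expSum g :=
  weightedExpSum_pow g k
@[simp] lemma expSum_x (i : ℕ) : expSum (x i) = 1 := weightedExpSum_x i

lemma x_add_two (i : ℕ) : x (i + 2) = (x 0)⁻¹ * x (i + 1) * x 0 := by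
  have := PresentedGroup.one_of_mem (rels := rels) ⟨0, i + 1, i.succ_pos, rfl⟩
  simp only [map_mul, map_inv] at this
  exact (mul_inv_eq_one.mp this).symm

lemma x_mem_closure_gens (i : ℕ) : x i ∈ Subgroup.closure gens := by
  have h0 : x 0 ∈ Subgroup.closure gens := Subgroup.subset_closure (by simp [gens])
  induction i using Nat.twoStepInduction with
  | zero => exact h0
  | one => exact Subgroup.subset_closure (by simp [gens])
  | more i _ hi => rw [x_add_two]; exact mul_mem (mul_mem (inv_mem h0) hi) h0

lemma inv_mem_gens {a : F} (ha : a ∈ gens) : a⁻¹ ∈ gens := by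
  rcases ha with rfl | rfl | rfl | rfl <;> simp [gens]

lemma exists_word (g : F) : ∃ w : List F, (∀ a ∈ w, a ∈ gens) ∧ w.prod = g := by
  have hg : g ∈ (Subgroup.closure gens).toSubmonoid :=
    PresentedGroup.generated_by rels _ x_mem_closure_gens g
  rw [Subgroup.closure_toSubmonoid,
    Set.union_eq_left.mpr fun a ha => by simpa using inv_mem_gens ha] at hg
  exact Submonoid.exists_list_of_mem_closure hg

lemma exists_word_length_eq_len (g : F) :
    ∃ w : List F, w.length = len g ∧ (∀ a ∈ w, a ∈ gens) ∧ w.prod = g := by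
  obtain ⟨w, hw, rfl⟩ := exists_word g
  exact Nat.sInf_mem (s := {m | ∃ w : List F, w.length = m ∧ (∀ a ∈ w, a ∈ gens) ∧ w.prod = _})
    ⟨w.length, w, rfl, hw, rfl⟩

lemma len_le_length {w : List F} (hw : ∀ a ∈ w, a ∈ gens) : len w.prod ≤ w.length :=
  Nat.sInf_le ⟨w, rfl, hw, rfl⟩

noncomputable def psi (c : ℤ) : ℚ := if c ≤ 0 then 2 ^ c else c + 1

lemma psi_of_nonpos {c : ℤ} (hc : c ≤ 0) : psi c = 2 ^ c := if_pos hc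

lemma psi_of_pos {c : ℤ} (hc : 0 < c) : psi c = c + 1 := if_neg (not_le.mpr hc)

lemma psi_one : psi 1 = 2 := by norm_num [psi]

lemma strictMono_psi : StrictMono psi := by
  intro c d hcd
  rcases le_or_gt d 0 with hd | hd
  · rw [psi_of_nonpos hd, psi_of_nonpos (by omega)]
    exact zpow_lt_zpow_right₀ one_lt_two hcd
  rw [psi_of_pos hd]
  rcases le_or_gt c 0 with hc | hc
  · have : (2 : ℚ) ^ c ≤ 1 := zpow_le_one_of_nonpos₀ one_le_two hc
    have : (1 : ℚ) ≤ d := by exact_mod_cast hd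
    rw [psi_of_nonpos hc]; linarith
  · rw [psi_of_pos hc]; exact_mod_cast (by omega : c + 1 < d + 1)

lemma xMap_zero_psi_add_one (c : ℤ) : xMap 0 (psi (c + 1)) = psi c := by
  rcases lt_trichotomy c 0 with hc | rfl | hc
  · have hpos : (0 : ℚ) < 2 ^ c := zpow_pos two_pos c
    have hle : (2 : ℚ) ^ c ≤ 1 := zpow_le_one_of_nonpos₀ one_le_two hc.le
    rw [psi_of_nonpos (by omega), psi_of_nonpos hc.le, zpow_add_one₀ two_ne_zero]
    unfold xMap; split_ifs <;> linarith
  · norm_num [psi, xMap]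
  · have : (1 : ℚ) ≤ c := by exact_mod_cast hc
    rw [psi_of_pos (by omega), psi_of_pos hc]
    push_cast
    unfold xMap; split_ifs <;> linarith

lemma xInvMap_zero_psi (c : ℤ) : xInvMap 0 (psi c) = psi (c + 1) := by
  rw [← xMap_zero_psi_add_one c, xInvMap_xMap]

lemma xInvMap_one_psi_le (c : ℤ) : xInvMap 1 (psi c) ≤ psi (c + 1) := by
  rcases le_or_gt c 0 with hc | hc
  · have : psi c ≤ 1 := by
      rw [psi_of_nonpos hc]; exact zpow_le_one_of_nonpos₀ one_le_two hc
    rw [xInvMap_of_le this]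
    exact (strictMono_psi (lt_add_one c)).le
  · have : (1 : ℚ) ≤ c := by exact_mod_cast hc
    rw [psi_of_pos hc, psi_of_pos (by omega)]
    push_cast
    unfold xInvMap; split_ifs <;> linarith

theorem act_prod_apply_two_le_psi {w : List F} (hw : ∀ a ∈ w, a ∈ gens) {c : ℤ}
    (h : (w.length : ℤ) < 2 * c + expSum w.prod + 2 * x0ExpSum w.prod) :
    act w.prod 2 ≤ psi c := by
  induction w generalizing c with
  | nil =>
    simp only [List.length_nil, List.prod_nil, expSum_one, x0ExpSum_one] at h
    simpa [psi_one] using strictMono_psi.monotone (show 1 ≤ c by omega)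
  | cons a w ih =>
    have hw' : ∀ b ∈ w, b ∈ gens := fun b hb => hw b (List.mem_cons_of_mem a hb)
    rw [List.prod_cons, map_mul, Equiv.Perm.mul_apply]
    rcases hw a List.mem_cons_self with rfl | rfl | rfl | rfl <;> simp at h ⊢
    · calc xMap 0 (act w.prod 2) ≤ xMap 0 (psi (c + 1)) :=
            (strictMono_xMap 0).monotone (ih hw' (by omega))
        _ = psi c := xMap_zero_psi_add_one c
    · calc xInvMap 0 (act w.prod 2) ≤ xInvMap 0 (psi (c - 2)) :=
            (strictMono_xInvMap 0).monotone (ih hw' (by omega))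
        _ ≤ psi c := by rw [xInvMap_zero_psi]; exact strictMono_psi.monotone (by omega)
    · exact (xMap_one_le _).trans (ih hw' (by omega))
    · calc xInvMap 1 (act w.prod 2) ≤ xInvMap 1 (psi (c - 1)) :=
            (strictMono_xInvMap 1).monotone (ih hw' (by omega))
        _ ≤ psi c := by simpa using xInvMap_one_psi_le (c - 1)

/-- `w.length + expSum w.prod - 2 * x0ExpSum w.prod` is twice the number of letters `x₀⁻¹` and
`x₁` in `w`, so `hq` says that `w` contains one of them. -/
theorem act_prod_apply_two_le_one_or_lt_psi {w : List F} (hw : ∀ a ∈ w, a ∈ gens) {c : ℤ}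
    (h : (w.length : ℤ) < 2 * c + expSum w.prod + 2 * x0ExpSum w.prod)
    (hq : 2 * x0ExpSum w.prod < w.length + expSum w.prod) :
    act w.prod 2 ≤ 1 ∨ act w.prod 2 < psi c := by
  induction w generalizing c with
  | nil => simp at hq
  | cons a w ih =>
    have hw' : ∀ b ∈ w, b ∈ gens := fun b hb => hw b (List.mem_cons_of_mem a hb)
    rw [List.prod_cons, map_mul, Equiv.Perm.mul_apply]
    rcases hw a List.mem_cons_self with rfl | rfl | rfl | rfl <;> simp at h hq ⊢
    · refine (ih hw' (c := c + 1) (by omega) (by omega)).imp xMap_zero_le_one fun hlt => ?_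
      calc xMap 0 (act w.prod 2) < xMap 0 (psi (c + 1)) := strictMono_xMap 0 hlt
        _ = psi c := xMap_zero_psi_add_one c
    · right
      calc xInvMap 0 (act w.prod 2) ≤ xInvMap 0 (psi (c - 2)) :=
            (strictMono_xInvMap 0).monotone (act_prod_apply_two_le_psi hw' (by omega))
        _ < psi c := by rw [xInvMap_zero_psi]; exact strictMono_psi (by omega)
    · have hle := act_prod_apply_two_le_psi hw' (c := c) (by omega)
      rcases le_or_gt (act w.prod 2) 1 with h1 | h1
      · exact Or.inl ((xMap_one_le _).trans h1)
      · exact Or.inr ((xMap_one_lt h1).trans_le hle)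
    · refine (ih hw' (c := c - 1) (by omega) (by omega)).imp
        (fun h1 => (xInvMap_of_le h1).trans_le h1) fun hlt => ?_
      calc xInvMap 1 (act w.prod 2) < xInvMap 1 (psi (c - 1)) := strictMono_xInvMap 1 hlt
        _ ≤ psi c := by simpa using xInvMap_one_psi_le (c - 1)

theorem act_apply_two_le_psi {g : F} {c : ℤ}
    (h : (len g : ℤ) < 2 * c + expSum g + 2 * x0ExpSum g) : act g 2 ≤ psi c := by
  obtain ⟨w, hlen, hw, rfl⟩ := exists_word_length_eq_len g
  exact act_prod_apply_two_le_psi hw (hlen ▸ h)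

theorem act_apply_two_le_one_or_lt_psi {g : F} {c : ℤ}
    (h : (len g : ℤ) < 2 * c + expSum g + 2 * x0ExpSum g)
    (hq : 2 * x0ExpSum g < len g + expSum g) : act g 2 ≤ 1 ∨ act g 2 < psi c := by
  obtain ⟨w, hlen, hw, rfl⟩ := exists_word_length_eq_len g
  exact act_prod_apply_two_le_one_or_lt_psi hw (hlen ▸ h) (hlen ▸ hq)

lemma r_eq (n : ℕ) : r n = x 1 * x 0 ^ (n + 1) * (x 1)⁻¹ ^ n := by
  rw [r, l]
  group

lemma act_x_one_inv_pow_apply (k : ℕ) {t : ℚ} (ht : 2 ≤ t) : act ((x 1)⁻¹ ^ k) t = t + k := by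
  induction k with
  | zero => simp
  | succ k ih =>
    rw [pow_succ', map_mul, Equiv.Perm.mul_apply, ih, map_inv, Equiv.Perm.inv_def,
      act_x_symm_apply, xInvMap_of_add_one_le (by push_cast; linarith)]
    push_cast; ring

lemma act_x_zero_pow_apply (k : ℕ) {t : ℚ} (ht : 2 ≤ t) : act (x 0 ^ k) (t + k) = t := by
  induction k with
  | zero => simp
  | succ k ih =>
    rw [pow_succ, map_mul, Equiv.Perm.mul_apply, act_x_apply,
      xMap_of_add_two_le (by push_cast; linarith)]
    convert ih using 2
    push_cast; ring

lemma act_r_apply_two (n : ℕ) : act (r n) 2 = 1 := by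
  rw [r_eq, map_mul, map_mul, Equiv.Perm.mul_apply, Equiv.Perm.mul_apply,
    act_x_one_inv_pow_apply n le_rfl, pow_succ', map_mul, Equiv.Perm.mul_apply,
    act_x_zero_pow_apply n le_rfl]
  norm_num [xMap]

lemma expSum_r (n : ℕ) : expSum (r n) = 2 := by simp [r_eq]; ring

lemma x0ExpSum_r (n : ℕ) : x0ExpSum (r n) = n + 1 := by simp [r_eq]

lemma len_x_one_inv_mul_r_le (n : ℕ) : len ((x 1)⁻¹ * r n) ≤ 2 * n + 1 := by
  set w := List.replicate (n + 1) (x 0) ++ List.replicate n (x 1)⁻¹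
  have hw : ∀ a ∈ w, a ∈ gens := by
    simp only [w, List.mem_append, List.mem_replicate]
    rintro a (⟨-, rfl⟩ | ⟨-, rfl⟩) <;> simp [gens]
  calc len ((x 1)⁻¹ * r n) = len w.prod := by simp [w, r_eq, mul_assoc]
    _ ≤ w.length := len_le_length hw
    _ = 2 * n + 1 := by simp [w]; ring

lemma lt_len_x_zero_mul_r (n : ℕ) : 2 * n + 2 < len (x 0 * r n) := by
  by_contra! hlen
  have := act_apply_two_le_psi (g := x 0 * r n) (c := -2) (by simp [expSum_r, x0ExpSum_r]; omega)
  norm_num [act_r_apply_two, xMap, psi] at this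

lemma lt_len_x_one_mul_r (n : ℕ) : 2 * n + 2 < len (x 1 * r n) := by
  by_contra! hlen
  have := act_apply_two_le_psi (g := x 1 * r n) (c := -1) (by simp [expSum_r, x0ExpSum_r]; omega)
  norm_num [act_r_apply_two, xMap, psi] at this

lemma lt_len_x_zero_inv_mul_r (n : ℕ) : 2 * n + 2 < len ((x 0)⁻¹ * r n) := by
  set g := (x 0)⁻¹ * r n with hg
  by_contra! hlen
  have hact : act g 2 = 2 := by norm_num [hg, act_r_apply_two, xInvMap]
  have hexp : expSum g = 1 ∧ x0ExpSum g = n := by simp [hg, expSum_r, x0ExpSum_r]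
  rcases lt_or_ge (2 * x0ExpSum g) (len g + expSum g) with hq | hq
  · have := act_apply_two_le_one_or_lt_psi (c := 1) (by omega) hq
    rw [hact, psi_one] at this
    norm_num at this
  · have := act_apply_two_le_psi (g := g) (c := 0) (by omega)
    rw [hact] at this
    norm_num [psi] at this

/-- For `n ≥ 1`, the only neighbor of `r` in the Cayley graph lying in `B_{2n+2}`
is `x₁⁻¹ r`. -/
theorem unique_neighbor_in_ball :
    ∀ n : ℕ, 1 ≤ n →
      len ((x 1)⁻¹ * r n) ≤ 2 * n + 2 ∧
      ∀ g ∈ ({x 0 * r n, (x 0)⁻¹ * r n, x 1 * r n, (x 1)⁻¹ * r n} : Set F),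
        len g ≤ 2 * n + 2 → g = (x 1)⁻¹ * r n := by
  intro n _
  refine ⟨(len_x_one_inv_mul_r_le n).trans (by omega), ?_⟩
  rintro g (rfl | rfl | rfl | rfl) hg
  · exact absurd hg (lt_len_x_zero_mul_r n).not_ge
  · exact absurd hg (lt_len_x_zero_inv_mul_r n).not_ge
  · exact absurd hg (lt_len_x_one_mul_r n).not_ge
  · rfl

end ThompsonF
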